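/- Let π be an n-profile with optimal two-facility cost C = OPT(π), and let g₁ = min(h₁, mean(π)), g₂ = max(h₂, mean(π)) as defined via Σᵢ max(0, h₁ − πᵢ) = C (h₁ ≥ π₁) and Σᵢ max(0, πᵢ − h₂) = C (h₂ ≤ πₙ). Then the 1-D solution σ = (g₁, g₂) satisfies cost(π, σ) ≤ 3·C. -/

import Mathlib

noncomputable def cost1 {n : ℕ} (π : Fin n → ℝ) (a b : ℝ) : ℝ :=
  ∑ i, min |π i - a| |π i - b|

/-!
Write `L(x) = Σ (x - πᵢ)⁺` and `R(y) = Σ (πᵢ - y)⁺` for the mass of `π` left of `x` and right of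
`y`, and `M(x, y) = Σ min (πᵢ - x)⁺ (y - πᵢ)⁺` for the cost of the points between them. For `x ≤ y`
the cost of `(x, y)` is exactly `L(x) + R(y) + M(x, y)`. At `(g₁, g₂)` the first two terms are at
most `L(h₁) = C` and `R(h₂) = C` by monotonicity, so it remains to bound `M(g₁, g₂)` by `C`.
If `g₂` is the mean `m`, then `M(g₁, m) ≤ L(m) = R(m) ≤ R(h₂) = C`, since the mean balances the two
tails; symmetrically if `g₁ = m`. Otherwise `(g₁, g₂) = (h₁, h₂)`, and an optimal solution `(a, b)`
has `L(a) ≤ C = L(h₁)` and `R(b) ≤ C = R(h₂)`, which forces `a ≤ h₁ ≤ h₂ ≤ b` and hence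
`M(h₁, h₂) ≤ M(a, b) ≤ C`.
-/

section Tails

variable {ι : Type*} [Fintype ι] (π : ι → ℝ)

noncomputable def lowerTail (x : ℝ) : ℝ := ∑ i, max 0 (x - π i)

noncomputable def upperTail (y : ℝ) : ℝ := ∑ i, max 0 (π i - y)

noncomputable def middleCost (x y : ℝ) : ℝ := ∑ i, min (max 0 (π i - x)) (max 0 (y - π i))

theorem lowerTail_nonneg (x : ℝ) : 0 ≤ lowerTail π x :=
  Finset.sum_nonneg fun _ _ ↦ le_max_left _ _

theorem upperTail_nonneg (y : ℝ) : 0 ≤ upperTail π y :=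
  Finset.sum_nonneg fun _ _ ↦ le_max_left _ _

theorem middleCost_nonneg (x y : ℝ) : 0 ≤ middleCost π x y :=
  Finset.sum_nonneg fun _ _ ↦ le_min (le_max_left _ _) (le_max_left _ _)

theorem lowerTail_mono : Monotone (lowerTail π) := fun _ _ hxy ↦
  Finset.sum_le_sum fun _ _ ↦ by gcongr

theorem upperTail_anti : Antitone (upperTail π) := fun _ _ hxy ↦
  Finset.sum_le_sum fun _ _ ↦ by gcongr

theorem middleCost_mono {x x' y y' : ℝ} (hx : x' ≤ x) (hy : y ≤ y') :
    middleCost π x y ≤ middleCost π x' y' :=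
  Finset.sum_le_sum fun _ _ ↦ by gcongr

theorem middleCost_le_lowerTail (x y : ℝ) : middleCost π x y ≤ lowerTail π y :=
  Finset.sum_le_sum fun _ _ ↦ min_le_right _ _

theorem middleCost_le_upperTail (x y : ℝ) : middleCost π x y ≤ upperTail π x :=
  Finset.sum_le_sum fun _ _ ↦ min_le_left _ _

variable {π}

theorem lowerTail_add_sub_le {i : ι} {x y : ℝ} (hi : π i ≤ x) (hxy : x ≤ y) :
    lowerTail π x + (y - x) ≤ lowerTail π y := by
  have hterm : ∀ j, 0 ≤ max 0 (y - π j) - max 0 (x - π j) := fun j ↦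
    sub_nonneg.2 (by gcongr)
  calc lowerTail π x + (y - x)
      = lowerTail π x + (max 0 (y - π i) - max 0 (x - π i)) := by
        rw [max_eq_right (by linarith), max_eq_right (by linarith)]; ring
    _ ≤ lowerTail π x + ∑ j, (max 0 (y - π j) - max 0 (x - π j)) := by
        gcongr; exact Finset.single_le_sum (fun j _ ↦ hterm j) (Finset.mem_univ i)
    _ = lowerTail π y := by rw [Finset.sum_sub_distrib, lowerTail, lowerTail]; ring

theorem upperTail_add_sub_le {i : ι} {x y : ℝ} (hi : y ≤ π i) (hxy : x ≤ y) :
    upperTail π y + (y - x) ≤ upperTail π x := by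
  have h := lowerTail_add_sub_le (π := fun j ↦ -π j) (neg_le_neg hi) (neg_le_neg hxy)
  simp only [lowerTail, sub_neg_eq_add, neg_add_eq_sub] at h
  simp only [upperTail]
  linarith

theorem le_of_lowerTail_le {i : ι} {x y : ℝ} (hi : π i ≤ x)
    (h : lowerTail π y ≤ lowerTail π x) : y ≤ x := by
  by_contra! hxy
  linarith [lowerTail_add_sub_le hi hxy.le]

theorem le_of_upperTail_le {i : ι} {x y : ℝ} (hi : y ≤ π i)
    (h : upperTail π x ≤ upperTail π y) : y ≤ x := by
  by_contra! hxy
  linarith [upperTail_add_sub_le hi hxy.le]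

variable (π)

theorem lowerTail_mean_eq_upperTail_mean :
    lowerTail π ((∑ i, π i) / Fintype.card ι) = upperTail π ((∑ i, π i) / Fintype.card ι) := by
  set m := (∑ i, π i) / Fintype.card ι
  have hterm : ∀ i, max 0 (m - π i) - max 0 (π i - m) = m - π i := fun i ↦ by
    rcases le_total (π i) m with h | h
    · rw [max_eq_right (by linarith), max_eq_left (by linarith)]; ring
    · rw [max_eq_left (by linarith), max_eq_right (by linarith)]; ring
  have hsum : ∑ i, (m - π i) = 0 := by
    rcases isEmpty_or_nonempty ι with hι | hι
    · simp
    · rw [Finset.sum_sub_distrib, Finset.sum_const, Finset.card_univ, nsmul_eq_mul,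
        mul_div_cancel₀ _ (by positivity), sub_self]
  rw [← sub_eq_zero, lowerTail, upperTail, ← Finset.sum_sub_distrib]
  exact (Finset.sum_congr rfl fun i _ ↦ hterm i).trans hsum

end Tails

theorem min_abs_sub_abs_sub_eq {x y : ℝ} (hxy : x ≤ y) (p : ℝ) :
    min |p - x| |p - y| =
      max 0 (x - p) + max 0 (p - y) + min (max 0 (p - x)) (max 0 (y - p)) := by
  grind [abs_of_nonneg, abs_of_nonpos]

section Cost

variable {n : ℕ} (π : Fin n → ℝ) {x y : ℝ}

theorem cost1_eq_of_le (hxy : x ≤ y) :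
    cost1 π x y = lowerTail π x + upperTail π y + middleCost π x y := by
  simp only [cost1, lowerTail, upperTail, middleCost, ← Finset.sum_add_distrib,
    min_abs_sub_abs_sub_eq hxy]

theorem lowerTail_le_cost1 (hxy : x ≤ y) : lowerTail π x ≤ cost1 π x y := by
  linarith [cost1_eq_of_le π hxy, upperTail_nonneg π y, middleCost_nonneg π x y]

theorem upperTail_le_cost1 (hxy : x ≤ y) : upperTail π y ≤ cost1 π x y := by
  linarith [cost1_eq_of_le π hxy, lowerTail_nonneg π x, middleCost_nonneg π x y]

theorem middleCost_le_cost1 (hxy : x ≤ y) : middleCost π x y ≤ cost1 π x y := by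
  linarith [cost1_eq_of_le π hxy, lowerTail_nonneg π x, upperTail_nonneg π y]

end Cost

theorem stmt7 {n : ℕ} (hn : 2 ≤ n) (π : Fin n → ℝ) (C : ℝ)
    (hC : IsLeast {c : ℝ | ∃ a b : ℝ, a ≤ b ∧ cost1 π a b = c} C)
    (h1 h2 : ℝ)
    (hh1 : π ⟨0, by omega⟩ ≤ h1 ∧ (∑ i, max 0 (h1 - π i)) = C)
    (hh2 : h2 ≤ π ⟨n - 1, by omega⟩ ∧ (∑ i, max 0 (π i - h2)) = C) :
    cost1 π (min h1 ((∑ i, π i) / n)) (max h2 ((∑ i, π i) / n)) ≤ 3 * C := by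
  obtain ⟨⟨a, b, hab, hCab⟩, -⟩ := hC
  obtain ⟨hπ0, hL⟩ := hh1
  obtain ⟨hπn, hR⟩ := hh2
  change lowerTail π h1 = C at hL
  change upperTail π h2 = C at hR
  set m := (∑ i, π i) / n
  have hbal : lowerTail π m = upperTail π m := by
    simpa using lowerTail_mean_eq_upperTail_mean π
  have hg : min h1 m ≤ max h2 m := (min_le_right _ _).trans (le_max_right _ _)
  have hlow : lowerTail π (min h1 m) ≤ C := hL ▸ lowerTail_mono π (min_le_left _ _)
  have hup : upperTail π (max h2 m) ≤ C := hR ▸ upperTail_anti π (le_max_left _ _)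
  suffices middleCost π (min h1 m) (max h2 m) ≤ C by
    rw [cost1_eq_of_le π hg]; linarith
  rcases le_or_gt h2 m with h2m | mh2
  · rw [max_eq_right h2m]
    calc middleCost π (min h1 m) m ≤ lowerTail π m := middleCost_le_lowerTail π _ _
      _ = upperTail π m := hbal
      _ ≤ C := hR ▸ upperTail_anti π h2m
  rcases le_or_gt m h1 with mh1 | h1m
  · rw [min_eq_right mh1]
    calc middleCost π m (max h2 m) ≤ upperTail π m := middleCost_le_upperTail π _ _
      _ = lowerTail π m := hbal.symm
      _ ≤ C := hL ▸ lowerTail_mono π mh1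
  have ha : a ≤ h1 := le_of_lowerTail_le hπ0 (hL ▸ hCab ▸ lowerTail_le_cost1 π hab)
  have hb : h2 ≤ b := le_of_upperTail_le hπn (hR ▸ hCab ▸ upperTail_le_cost1 π hab)
  rw [min_eq_left h1m.le, max_eq_left mh2.le]
  calc middleCost π h1 h2 ≤ middleCost π a b := middleCost_mono π ha hb
    _ ≤ C := hCab ▸ middleCost_le_cost1 π hab
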